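/- Let γ ∈ SL₂(ℤ) and let m ≥ 1 be an integer with γ^m equal to the identity matrix. Then m·Φ(γ) = 3·∑_{k=1}^{m−1} sign(c_γ · c_{γ^k} · c_{γ^{k+1}}), where c_g denotes the lower-left entry of a matrix g and sign(0) = 0. In particular Φ(γ) is rational. -/

import Mathlib

/-- The sawtooth function `((x)) = x - ⌊x⌋ - 1/2` for `x ∉ ℤ`, and `((x)) = 0` for `x ∈ ℤ`. -/
noncomputable def saw (x : ℚ) : ℚ := if x.den = 1 then 0 else x - ⌊x⌋ - 1 / 2

/-- The Dedekind sum `s(a, c) = ∑_{k=1}^{c-1} ((k/c)) ((k a/c))`. -/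
noncomputable def dedekindSum (a c : ℤ) : ℚ :=
  ∑ k ∈ Finset.Icc (1 : ℤ) (c - 1), saw ((k : ℚ) / (c : ℚ)) * saw ((k : ℚ) * (a : ℚ) / (c : ℚ))

/-- The Dedekind symbol `Φ` on `SL₂(ℤ)`. -/
noncomputable def dedekindPhi (γ : Matrix.SpecialLinearGroup (Fin 2) ℤ) : ℚ :=
  if (γ : Matrix (Fin 2) (Fin 2) ℤ) 1 0 = 0 then
    ((γ : Matrix (Fin 2) (Fin 2) ℤ) 0 1 : ℚ) / ((γ : Matrix (Fin 2) (Fin 2) ℤ) 1 1 : ℚ)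
  else
    (((γ : Matrix (Fin 2) (Fin 2) ℤ) 0 0 : ℚ) + ((γ : Matrix (Fin 2) (Fin 2) ℤ) 1 1 : ℚ)) /
        ((γ : Matrix (Fin 2) (Fin 2) ℤ) 1 0 : ℚ) -
      12 * (((γ : Matrix (Fin 2) (Fin 2) ℤ) 1 0).sign : ℚ) *
        dedekindSum ((γ : Matrix (Fin 2) (Fin 2) ℤ) 0 0) |(γ : Matrix (Fin 2) (Fin 2) ℤ) 1 0|

/-- The Rademacher symbol `Ψ(γ) = Φ(γ) - 3 sign(c (a + d))` on `SL₂(ℤ)`. -/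
noncomputable def rademacherPsi (γ : Matrix.SpecialLinearGroup (Fin 2) ℤ) : ℚ :=
  dedekindPhi γ -
    3 * (((γ : Matrix (Fin 2) (Fin 2) ℤ) 1 0 *
      ((γ : Matrix (Fin 2) (Fin 2) ℤ) 0 0 + (γ : Matrix (Fin 2) (Fin 2) ℤ) 1 1)).sign : ℚ)

/-!
Let `γ = (a, b; c, d)` have trace `t`, and let `U` be the Lucas sequence `U 0 = 0`, `U 1 = 1`,
`U (k + 2) = t U (k + 1) - U k`. By Cayley–Hamilton `γ ^ (k + 1) = U (k + 1) γ - U k`, so the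
off-diagonal entries of `γ ^ k` are `U k` times those of `γ`, and `γ ^ m = 1` forces
`U m b = U m c = 0`. As `|U k| ≥ k` once `|t| ≥ 2`, either `c = 0`, whence `b = 0` and both
sides vanish, or `U m = 0` and `|t| ≤ 1`. In the second case both sides equal `m t sign c`.
On the right, `U (k + 3) = -t U k` for `t = ±1` (and `U k U (k + 1) = 0` for `t = 0`), so the
signs are periodic. On the left, `a² - t a + 1 ≡ 0 (mod c)` evaluates `s(a, |c|)` on `ZMod |c|`:
for `t = 0`, `a⁻¹ = -a` gives `s(a) = s(-a) = -s(a)`; for `t = -1`, the residues of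
`k, k a, k a²` add up to `|c|` or `2 |c|`, so `((k/c)) + ((k a/c)) + ((k a²/c)) = ±1/2`, and
summing the squares over `k` yields `s(a)` in terms of `∑ ((k/c))²`; `t = 1` follows from
`a ↦ -a`.
-/

open Finset

lemma saw_add_intCast (x : ℚ) (k : ℤ) : saw (x + k) = saw x := by
  unfold saw
  rw [Rat.add_intCast_den, Int.floor_add_intCast]
  split_ifs <;> push_cast <;> ring

lemma saw_neg (x : ℚ) : saw (-x) = -saw x := by
  unfold saw
  rw [Rat.den_neg_eq_den]
  split_ifs with h
  · simp
  · have hx : (⌊x⌋ : ℚ) < x :=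
      (Int.floor_le x).lt_of_ne fun hx => h (hx ▸ Rat.den_intCast ⌊x⌋)
    have : ⌊-x⌋ = -⌊x⌋ - 1 := by
      rw [Int.floor_eq_iff]; push_cast
      constructor <;> linarith [Int.lt_floor_add_one x]
    rw [this]; push_cast; ring

lemma saw_of_pos_of_lt_one {x : ℚ} (h0 : 0 < x) (h1 : x < 1) : saw x = x - 1 / 2 := by
  have hden : x.den ≠ 1 := by
    intro h
    have hnum : (x.num : ℚ) = x := (Rat.den_eq_one_iff x).mp h
    have : 0 < x.num := by exact_mod_cast hnum ▸ h0
    have : x.num < 1 := by exact_mod_cast hnum ▸ h1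
    omega
  rw [saw, if_neg hden, Int.floor_eq_zero_iff.mpr ⟨h0.le, h1⟩]
  simp

lemma Function.Periodic.sum_range_mul {M : Type*} [AddCommMonoid M] {f : ℕ → M} {p : ℕ}
    (hf : Function.Periodic f p) (q : ℕ) :
    ∑ k ∈ range (q * p), f k = q • ∑ k ∈ range p, f k := by
  induction q with
  | zero => simp
  | succ q ih =>
    rw [add_mul, one_mul, sum_range_add, ih, succ_nsmul]
    congr 1
    exact sum_congr rfl fun k _ => by rw [add_comm]; exact hf.nat_mul q k

lemma sum_range_sub_sq (n : ℕ) (c : ℚ) :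
    ∑ k ∈ range n, ((k : ℚ) - c) ^ 2 =
      n * (n - 1) * (2 * n - 1) / 6 - c * n * (n - 1) + n * c ^ 2 := by
  induction n with
  | zero => simp
  | succ n ih => rw [sum_range_succ, ih]; push_cast; ring

lemma sum_comp_mul_right_of_isUnit {R M : Type*} [Monoid R] [Fintype R] [AddCommMonoid M] {a : R}
    (ha : IsUnit a) (f : R → M) : ∑ x, f (x * a) = ∑ x, f x :=
  Equiv.sum_comp (Units.mulRight ha.unit) f

noncomputable def zmodSaw (N : ℕ) (x : ZMod N) : ℚ := saw (x.val / N)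

noncomputable def zmodDedekindSum (N : ℕ) [NeZero N] (a : ZMod N) : ℚ :=
  ∑ x, zmodSaw N x * zmodSaw N (x * a)

lemma zmodSaw_zero (N : ℕ) : zmodSaw N 0 = 0 := by
  simp [zmodSaw, saw]

section ZModSaw

variable {N : ℕ} [NeZero N]

lemma zmodSaw_intCast (k : ℤ) : zmodSaw N k = saw (k / N) := by
  have hN : (N : ℚ) ≠ 0 := Nat.cast_ne_zero.mpr (NeZero.ne N)
  have hk : ((k : ZMod N).val : ℤ) + N * (k / N) = k := by
    rw [ZMod.val_intCast, Int.emod_add_mul_ediv]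
  rw [zmodSaw, ← saw_add_intCast _ (k / N), div_add' _ _ _ hN, mul_comm]
  congr 2
  exact_mod_cast hk

lemma zmodSaw_neg (x : ZMod N) : zmodSaw N (-x) = -zmodSaw N x := by
  obtain ⟨k, rfl⟩ := ZMod.intCast_surjective x
  rw [← Int.cast_neg, zmodSaw_intCast, zmodSaw_intCast, Int.cast_neg, neg_div, saw_neg]

lemma zmodSaw_of_ne_zero {x : ZMod N} (hx : x ≠ 0) : zmodSaw N x = x.val / N - 1 / 2 := by
  have hN : (0 : ℚ) < N := Nat.cast_pos.mpr (NeZero.pos N)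
  refine saw_of_pos_of_lt_one (div_pos ?_ hN) ((div_lt_one hN).mpr ?_)
  · exact_mod_cast (ZMod.val_pos).mpr hx
  · exact_mod_cast ZMod.val_lt x

lemma sum_Icc_intCast_eq_sum_zmod {M : Type*} [AddCommMonoid M] (f : ZMod N → M) (hf : f 0 = 0) :
    ∑ k ∈ Icc (1 : ℤ) (N - 1), f k = ∑ x, f x := by
  rw [← sum_erase _ hf]
  refine sum_nbij' (fun k => (k : ZMod N)) (fun x => (x.val : ℤ)) ?_ ?_ ?_ ?_ (fun _ _ => rfl)
  · intro k hk
    rw [mem_Icc] at hk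
    rw [mem_erase, and_iff_left (mem_univ _), Ne, ZMod.intCast_zmod_eq_zero_iff_dvd]
    intro h
    have := Int.le_of_dvd (by omega) h
    omega
  · intro x hx
    have := ZMod.val_lt x
    have := (ZMod.val_pos).mpr (mem_erase.mp hx).1
    rw [mem_Icc]
    omega
  · intro k hk
    rw [mem_Icc] at hk
    rw [ZMod.val_intCast]
    exact Int.emod_eq_of_lt (by omega) (by omega)
  · intro x _
    simp

lemma sum_zmod_val_eq_sum_range {M : Type*} [AddCommMonoid M] (g : ℕ → M) :
    ∑ x : ZMod N, g x.val = ∑ k ∈ range N, g k := by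
  obtain ⟨n, rfl⟩ : ∃ n, N = n + 1 := Nat.exists_eq_succ_of_ne_zero (NeZero.ne N)
  exact Fin.sum_univ_eq_sum_range g (n + 1)

lemma dedekindSum_natCast (a : ℤ) : dedekindSum a N = zmodDedekindSum N a := by
  rw [zmodDedekindSum, ← sum_Icc_intCast_eq_sum_zmod _ (by simp [zmodSaw_zero])]
  refine sum_congr (by simp) fun k _ => ?_
  simp only [← Int.cast_mul, zmodSaw_intCast]
  push_cast
  rfl

end ZModSaw

section ZModDedekindSum

variable {N : ℕ} [NeZero N]

lemma zmodDedekindSum_eq_of_mul_eq_one {a b : ZMod N} (hab : a * b = 1) :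
    zmodDedekindSum N a = zmodDedekindSum N b := by
  rw [zmodDedekindSum, ← sum_comp_mul_right_of_isUnit (IsUnit.of_mul_eq_one_right a hab)]
  refine sum_congr rfl fun x _ => ?_
  rw [mul_assoc, mul_comm b a, hab, mul_one, mul_comm]

lemma zmodDedekindSum_neg (a : ZMod N) : zmodDedekindSum N (-a) = -zmodDedekindSum N a := by
  simp only [zmodDedekindSum, mul_neg, zmodSaw_neg, sum_neg_distrib]

lemma zmodDedekindSum_eq_zero_of_sq_eq_neg_one {a : ZMod N} (ha : a ^ 2 = -1) :
    zmodDedekindSum N a = 0 := by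
  have h := zmodDedekindSum_eq_of_mul_eq_one (a := a) (b := -a)
    (by rw [mul_neg, ← sq, ha, neg_neg])
  rw [zmodDedekindSum_neg] at h
  linarith

lemma sum_zmodSaw_sq : ∑ x : ZMod N, zmodSaw N x ^ 2 = (N - 1) * (N - 2) / (12 * N) := by
  have hN : (N : ℚ) ≠ 0 := Nat.cast_ne_zero.mpr (NeZero.ne N)
  have hpt : ∀ x : ZMod N, zmodSaw N x ^ 2 =
      ((x.val : ℚ) - N / 2) ^ 2 / N ^ 2 - if x = 0 then 1 / 4 else 0 := by
    intro x
    by_cases hx : x = 0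
    · rw [hx, zmodSaw_zero, if_pos rfl, ZMod.val_zero]
      field_simp
      ring
    · rw [zmodSaw_of_ne_zero hx, if_neg hx]
      field_simp
      ring
  simp_rw [hpt, sum_sub_distrib, sum_ite_eq', if_pos (mem_univ _), ← sum_div,
    sum_zmod_val_eq_sum_range (fun k => ((k : ℚ) - N / 2) ^ 2), sum_range_sub_sq]
  field_simp
  ring

lemma zmodSaw_add_add_sq {a x : ZMod N} (ha : a ^ 2 + a + 1 = 0) (hx : x ≠ 0) :
    (zmodSaw N x + zmodSaw N (x * a) + zmodSaw N (x * a ^ 2)) ^ 2 = 1 / 4 := by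
  have hunit : IsUnit a := IsUnit.of_mul_eq_one (-(a + 1)) (by linear_combination -ha)
  have hxa : x * a ≠ 0 := (hunit.mul_left_eq_zero).not.mpr hx
  have hxa2 : x * a ^ 2 ≠ 0 := ((hunit.pow 2).mul_left_eq_zero).not.mpr hx
  -- `x (1 + a + a²) = 0`, so the three residues add up to `N` or `2 N`
  obtain ⟨q, hq⟩ : N ∣ x.val + (x * a).val + (x * a ^ 2).val := by
    rw [← ZMod.natCast_eq_zero_iff]
    push_cast [ZMod.natCast_zmod_val]
    linear_combination x * ha
  have h1 := ZMod.val_lt x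
  have h2 := ZMod.val_lt (x * a)
  have h3 := ZMod.val_lt (x * a ^ 2)
  have h1' := (ZMod.val_pos).mpr hx
  have h2' := (ZMod.val_pos).mpr hxa
  have h3' := (ZMod.val_pos).mpr hxa2
  have hq12 : q = 1 ∨ q = 2 := by
    have : 0 < q := by nlinarith
    have : q < 3 := by nlinarith
    omega
  have hN : (N : ℚ) ≠ 0 := Nat.cast_ne_zero.mpr (NeZero.ne N)
  have hsum : zmodSaw N x + zmodSaw N (x * a) + zmodSaw N (x * a ^ 2) = q - 3 / 2 := by
    rw [zmodSaw_of_ne_zero hx, zmodSaw_of_ne_zero hxa, zmodSaw_of_ne_zero hxa2]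
    have hq' : ((x.val : ℚ) + (x * a).val + (x * a ^ 2).val) / N = q := by
      rw [div_eq_iff hN]
      exact_mod_cast hq.trans (Nat.mul_comm N q)
    linear_combination hq'
  rw [hsum]
  rcases hq12 with rfl | rfl <;> norm_num

lemma zmodDedekindSum_of_sq_add_add_one {a : ZMod N} (ha : a ^ 2 + a + 1 = 0) :
    zmodDedekindSum N a = (N - 1) / (12 * N) := by
  have hN : (N : ℚ) ≠ 0 := Nat.cast_ne_zero.mpr (NeZero.ne N)
  have hunit : IsUnit a := IsUnit.of_mul_eq_one (-(a + 1)) (by linear_combination -ha)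
  have hcube : a ^ 2 * a = 1 := by linear_combination (a - 1) * ha
  set s : ZMod N → ℚ := zmodSaw N
  have hsq : ∑ x, (s x + s (x * a) + s (x * a ^ 2)) ^ 2 = (N - 1) / 4 := by
    have hpt : ∀ x, (s x + s (x * a) + s (x * a ^ 2)) ^ 2 =
        1 / 4 - if x = 0 then 1 / 4 else 0 := by
      intro x
      by_cases hx : x = 0
      · simp [hx, s, zmodSaw_zero]
      · rw [zmodSaw_add_add_sq ha hx, if_neg hx, sub_zero]
    simp only [hpt, sum_sub_distrib, sum_const, card_univ, ZMod.card, sum_ite_eq', mem_univ,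
      if_true]
    ring
  have hexpand : ∑ x, (s x + s (x * a) + s (x * a ^ 2)) ^ 2 =
      ∑ x, s x ^ 2 + ∑ x, s (x * a) ^ 2 + ∑ x, s (x * a ^ 2) ^ 2 +
        2 * (∑ x, s x * s (x * a) + ∑ x, s (x * a) * s (x * a * a) +
          ∑ x, s x * s (x * a ^ 2)) := by
    simp only [mul_add, mul_sum, ← sum_add_distrib]
    exact sum_congr rfl fun x _ => by rw [show x * a * a = x * a ^ 2 by ring]; ring
  rw [sum_comp_mul_right_of_isUnit hunit (fun x => s x ^ 2),
    sum_comp_mul_right_of_isUnit (hunit.pow 2) (fun x => s x ^ 2),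
    sum_comp_mul_right_of_isUnit hunit (fun x => s x * s (x * a))] at hexpand
  change _ = _ + 2 * (zmodDedekindSum N a + zmodDedekindSum N a + zmodDedekindSum N (a ^ 2))
    at hexpand
  rw [zmodDedekindSum_eq_of_mul_eq_one hcube, sum_zmodSaw_sq, hsq] at hexpand
  field_simp at hexpand ⊢
  linear_combination -hexpand / 24

end ZModDedekindSum

lemma dedekindSum_eq_of_dvd {t a n : ℤ} (ht : |t| ≤ 1) (hn : 0 < n)
    (h : n ∣ a ^ 2 - t * a + 1) :
    dedekindSum a n = -t * (n - 1) / (12 * n) := by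
  lift n to ℕ using hn.le
  have : NeZero n := ⟨by omega⟩
  have ha : (a : ZMod n) ^ 2 - t * a + 1 = 0 := by
    exact_mod_cast (ZMod.intCast_zmod_eq_zero_iff_dvd _ n).mpr h
  obtain rfl | rfl | rfl : t = -1 ∨ t = 0 ∨ t = 1 := by
    rcases abs_le.mp ht with ⟨h1, h2⟩; omega
  all_goals rw [dedekindSum_natCast]; push_cast
  · rw [zmodDedekindSum_of_sq_add_add_one (by linear_combination ha)]
    ring
  · rw [zmodDedekindSum_eq_zero_of_sq_eq_neg_one (by linear_combination ha)]
    ring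
  · rw [← neg_neg (a : ZMod n), zmodDedekindSum_neg,
      zmodDedekindSum_of_sq_add_add_one (by linear_combination ha)]
    ring

def lucasU (t : ℤ) : ℕ → ℤ
  | 0 => 0
  | 1 => 1
  | k + 2 => t * lucasU t (k + 1) - lucasU t k

section LucasU

variable {t : ℤ}

lemma lucasU_add_three (k : ℕ) :
    lucasU t (k + 3) = (t ^ 2 - 1) * lucasU t (k + 1) - t * lucasU t k := by
  simp only [lucasU]
  ring

lemma lucasU_three_mul_add (ht : t ^ 2 = 1) (q r : ℕ) :
    lucasU t (3 * q + r) = (-t) ^ q * lucasU t r := by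
  induction q with
  | zero => simp
  | succ q ih =>
    rw [show 3 * (q + 1) + r = 3 * q + r + 3 by ring, lucasU_add_three, ht, ih]
    ring

lemma three_dvd_of_lucasU_eq_zero (ht : t ^ 2 = 1) {m : ℕ} (hm : lucasU t m = 0) : 3 ∣ m := by
  have ht0 : t ≠ 0 := by rintro rfl; norm_num at ht
  rw [← Nat.div_add_mod m 3, lucasU_three_mul_add ht] at hm
  have hr := (mul_eq_zero.mp hm).resolve_left (pow_ne_zero _ (neg_ne_zero.mpr ht0))
  have : m % 3 < 3 := Nat.mod_lt _ (by norm_num)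
  interval_cases h : m % 3
  · exact Nat.dvd_of_mod_eq_zero h
  · simp [lucasU] at hr
  · simp [lucasU, ht0] at hr

lemma lucasU_zero_two_mul (j : ℕ) : lucasU 0 (2 * j) = 0 := by
  induction j with
  | zero => rfl
  | succ j ih => rw [show 2 * (j + 1) = 2 * j + 2 by ring, lucasU, ih]; ring

lemma lucasU_zero_mul_lucasU_zero_succ (k : ℕ) : lucasU 0 k * lucasU 0 (k + 1) = 0 := by
  rcases Nat.even_or_odd' k with ⟨j, rfl | rfl⟩
  · rw [lucasU_zero_two_mul, zero_mul]
  · rw [show 2 * j + 1 + 1 = 2 * (j + 1) by ring, lucasU_zero_two_mul, mul_zero]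

lemma le_abs_lucasU (ht : 2 ≤ |t|) (k : ℕ) : (k : ℤ) ≤ |lucasU t k| := by
  have step : ∀ k, |lucasU t k| + 1 ≤ |lucasU t (k + 1)| := by
    intro k
    induction k with
    | zero => simp [lucasU]
    | succ k ih =>
      calc |lucasU t (k + 1)| + 1 ≤ 2 * |lucasU t (k + 1)| - |lucasU t k| := by linarith
        _ ≤ |t| * |lucasU t (k + 1)| - |lucasU t k| := by gcongr
        _ = |t * lucasU t (k + 1)| - |lucasU t k| := by rw [abs_mul]
        _ ≤ |lucasU t (k + 2)| := abs_sub_abs_le_abs_sub _ _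
  induction k with
  | zero => simp
  | succ k ih => push_cast; linarith [step k]

lemma lucasU_ne_zero (ht : 2 ≤ |t|) {m : ℕ} (hm : 1 ≤ m) : lucasU t m ≠ 0 := by
  intro h
  have := le_abs_lucasU ht m
  rw [h, abs_zero] at this
  omega

lemma three_mul_sum_sign_lucasU (ht : |t| ≤ 1) {m : ℕ} (hm : lucasU t m = 0) :
    3 * ∑ k ∈ range m, (lucasU t k * lucasU t (k + 1)).sign = m * t := by
  rcases eq_or_ne t 0 with rfl | ht0
  · simp [lucasU_zero_mul_lucasU_zero_succ]
  have ht1 : t ^ 2 = 1 := by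
    rcases abs_le.mp ht with ⟨h1, h2⟩
    have : t = -1 ∨ t = 1 := by omega
    rcases this with rfl | rfl <;> norm_num
  have hper : Function.Periodic (fun k => (lucasU t k * lucasU t (k + 1)).sign) 3 := by
    have h3 : ∀ j, lucasU t (j + 3) = -t * lucasU t j := fun j => by
      rw [lucasU_add_three, ht1]; ring
    intro k
    simp only [show k + 3 + 1 = k + 1 + 3 by ring, h3]
    rw [show -t * lucasU t k * (-t * lucasU t (k + 1)) =
      t ^ 2 * (lucasU t k * lucasU t (k + 1)) by ring, ht1, one_mul]
  obtain ⟨q, rfl⟩ := three_dvd_of_lucasU_eq_zero ht1 hm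
  rw [Nat.mul_comm 3 q, hper.sum_range_mul]
  rcases sq_eq_one_iff.mp ht1 with rfl | rfl <;> simp [sum_range_succ, lucasU] <;> ring

end LucasU

lemma Int.sign_mul_mul_mul (x y c : ℤ) :
    (c * (x * c) * (y * c)).sign = (x * y).sign * c.sign := by
  rcases eq_or_ne c 0 with rfl | hc
  · simp
  · rw [show c * (x * c) * (y * c) = x * y * c * c ^ 2 by ring, Int.sign_mul (x * y * c),
      Int.sign_eq_one_of_pos (sq_pos_of_ne_zero hc), mul_one, Int.sign_mul]

namespace Matrix

lemma mul_self_eq_trace_smul_sub_det_smul_one {R : Type*} [CommRing R]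
    (A : Matrix (Fin 2) (Fin 2) R) :
    A * A = A.trace • A - A.det • 1 := by
  ext i j
  fin_cases i <;> fin_cases j <;>
    simp [mul_apply, trace_fin_two, det_fin_two] <;> ring

variable {A : Matrix (Fin 2) (Fin 2) ℤ}

lemma pow_succ_eq_lucasU (hA : A.det = 1) (k : ℕ) :
    A ^ (k + 1) = lucasU A.trace (k + 1) • A - lucasU A.trace k • 1 := by
  induction k with
  | zero => simp [lucasU]
  | succ k ih =>
    rw [pow_succ, ih, sub_mul, smul_mul_assoc, smul_mul_assoc,
      mul_self_eq_trace_smul_sub_det_smul_one, hA, one_mul, lucasU]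
    module

lemma pow_apply_eq_lucasU_mul (hA : A.det = 1) (k : ℕ) {i j : Fin 2} (hij : i ≠ j) :
    (A ^ k) i j = lucasU A.trace k * A i j := by
  cases k with
  | zero => simp [lucasU, one_apply_ne hij]
  | succ k =>
    simp only [pow_succ_eq_lucasU hA, sub_apply, smul_apply, one_apply_ne hij, smul_eq_mul,
      mul_zero, sub_zero]

lemma two_le_abs_trace_of_apply_one_zero_eq_zero (hA : A.det = 1) (hc : A 1 0 = 0) :
    2 ≤ |A.trace| := by
  rw [det_fin_two, hc, mul_zero, sub_zero] at hA
  rw [trace_fin_two]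
  rcases Int.eq_one_or_neg_one_of_mul_eq_one' hA with ⟨h0, h1⟩ | ⟨h0, h1⟩ <;> simp [h0, h1]

lemma three_mul_sum_sign_apply_one_zero_pow (hA : A.det = 1) (ht : |A.trace| ≤ 1) {m : ℕ}
    (hm : lucasU A.trace m = 0) :
    3 * ∑ k ∈ Ico 1 m, (A 1 0 * (A ^ k) 1 0 * (A ^ (k + 1)) 1 0).sign =
      m * (A.trace * (A 1 0).sign) := by
  have hterm : ∀ k, (A 1 0 * (A ^ k) 1 0 * (A ^ (k + 1)) 1 0).sign =
      (lucasU A.trace k * lucasU A.trace (k + 1)).sign * (A 1 0).sign := by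
    intro k
    rw [pow_apply_eq_lucasU_mul hA k one_ne_zero, pow_apply_eq_lucasU_mul hA (k + 1) one_ne_zero]
    exact Int.sign_mul_mul_mul _ _ _
  have hIco : ∑ k ∈ Ico 1 m, (lucasU A.trace k * lucasU A.trace (k + 1)).sign =
      ∑ k ∈ range m, (lucasU A.trace k * lucasU A.trace (k + 1)).sign := by
    refine sum_subset (fun k hk => ?_) (fun k hk hk' => ?_)
    · simp only [mem_Ico, mem_range] at hk ⊢; omega
    · obtain rfl : k = 0 := by simp only [mem_Ico, mem_range] at hk hk'; omega
      simp [lucasU]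
  simp only [hterm, ← sum_mul, hIco]
  rw [← mul_assoc, three_mul_sum_sign_lucasU ht hm, mul_assoc]

end Matrix

open scoped MatrixGroups

lemma dedekindPhi_eq_trace_mul_sign {γ : SL(2, ℤ)} (hc : γ 1 0 ≠ 0)
    (ht : |(γ : Matrix (Fin 2) (Fin 2) ℤ).trace| ≤ 1) :
    dedekindPhi γ = (γ : Matrix (Fin 2) (Fin 2) ℤ).trace * (γ 1 0).sign := by
  have hdet := γ.det_coe
  rw [Matrix.det_fin_two] at hdet
  rw [Matrix.trace_fin_two] at ht ⊢
  have hdvd : |γ 1 0| ∣ γ 0 0 ^ 2 - (γ 0 0 + γ 1 1) * γ 0 0 + 1 :=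
    (abs_dvd _ _).mpr ⟨-γ 0 1, by linear_combination -hdet⟩
  rw [dedekindPhi, if_neg hc, dedekindSum_eq_of_dvd ht (abs_pos.mpr hc) hdvd]
  have hcq : (γ 1 0 : ℚ) ≠ 0 := by exact_mod_cast hc
  rcases hc.lt_or_gt with hc | hc
  · rw [abs_of_neg hc, Int.sign_eq_neg_one_of_neg hc]
    push_cast
    field_simp
    ring
  · rw [abs_of_pos hc, Int.sign_eq_one_of_pos hc]
    push_cast
    field_simp
    ring

/-- If `γ ∈ SL₂(ℤ)` satisfies `γ^m = 1` for some `m ≥ 1`, then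
`m Φ(γ) = 3 ∑_{k=1}^{m-1} sign(c_γ c_{γ^k} c_{γ^{k+1}})`; in particular `Φ(γ)` is
a rational number. -/
theorem dedekindPhi_of_finite_order (γ : Matrix.SpecialLinearGroup (Fin 2) ℤ) (m : ℕ)
    (hm : 1 ≤ m) (hγ : γ ^ m = 1) :
    (m : ℚ) * dedekindPhi γ =
      3 * ∑ k ∈ Finset.Ico 1 m,
        (((γ : Matrix (Fin 2) (Fin 2) ℤ) 1 0 *
          ((γ ^ k : Matrix.SpecialLinearGroup (Fin 2) ℤ) : Matrix (Fin 2) (Fin 2) ℤ) 1 0 *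
          ((γ ^ (k + 1) : Matrix.SpecialLinearGroup (Fin 2) ℤ) : Matrix (Fin 2) (Fin 2) ℤ) 1 0).sign
            : ℚ) := by
  have hA := γ.det_coe
  set t := (γ : Matrix (Fin 2) (Fin 2) ℤ).trace
  have hu : ∀ {i j : Fin 2}, i ≠ j → lucasU t m * γ i j = 0 := fun hij => by
    rw [← Matrix.pow_apply_eq_lucasU_mul hA m hij, ← Matrix.SpecialLinearGroup.coe_pow, hγ,
      Matrix.SpecialLinearGroup.coe_one, Matrix.one_apply_ne hij]
  by_cases hc : γ 1 0 = 0
  · have hb : γ 0 1 = 0 := (mul_eq_zero.mp (hu zero_ne_one)).resolve_left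
      (lucasU_ne_zero (Matrix.two_le_abs_trace_of_apply_one_zero_eq_zero hA hc) hm)
    simp [dedekindPhi, hc, hb]
  · have hum : lucasU t m = 0 := (mul_eq_zero.mp (hu one_ne_zero)).resolve_right hc
    have ht : |t| ≤ 1 := by
      by_contra! h
      exact lucasU_ne_zero h hm hum
    simp only [Matrix.SpecialLinearGroup.coe_pow]
    rw [dedekindPhi_eq_trace_mul_sign hc ht]
    exact_mod_cast (Matrix.three_mul_sum_sign_apply_one_zero_pow hA ht hum).symm
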